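/- For all x < 0, erf(x)·exp((4/π − 4/3)x²) ≥ (2x/√π), and consequently the function g(M) = (1/√(2π(1−M²)))·exp(−(erf⁻¹(M))²) is increasing on (−1, 0). -/

import Mathlib

/-- The Gauss error function `erf x = (2/√π) ∫₀ˣ e^{-t²} dt`. -/
noncomputable def erf (x : ℝ) : ℝ :=
  (2 / Real.sqrt Real.pi) * ∫ t in (0 : ℝ)..x, Real.exp (-t ^ 2)

/-!
For `x < 0` the first claim is `|erf x| ≤ 2|x|/√π` (the integrand is at most `1`) together with
`4/π - 4/3 < 0`. For the second, writing `M = erf y`, the square of `g(M)` is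
`exp (-2y²) / (2π (1 - erf² y))`; its derivative in `y` is positive for `y = -a < 0` exactly when
`erf a · e^{-a²} < √π a (1 - erf² a)`. This follows from the Gaussian tail bound
`∫ₐ^∞ e^{-t²} dt > e^{-a²} / (a + √(a² + 2))`, which holds because
`∫₀ᵃ e^{-t²} dt + e^{-a²} / (a + √(a² + 2))` is strictly increasing with limit `√π/2`.
-/

open Real Set Filter Topology MeasureTheory

lemma StrictMono.lt_of_tendsto_atTop {α β : Type*} [SemilatticeSup α] [NoMaxOrder α]
    [TopologicalSpace β] [Preorder β] [OrderClosedTopology β] {f : α → β} {L : β}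
    (hf : StrictMono f) (h : Tendsto f atTop (𝓝 L)) (x : α) : f x < L :=
  let ⟨y, hy⟩ := exists_gt x
  (hf hy).trans_le (hf.monotone.ge_of_tendsto h y)

lemma hasDerivAt_erf (x : ℝ) : HasDerivAt erf (2 / √π * exp (-x ^ 2)) x :=
  ((continuous_exp.comp (continuous_pow 2).neg).integral_hasStrictDerivAt 0 x).hasDerivAt
    |>.const_mul _

lemma erf_strictMono : StrictMono erf :=
  strictMono_of_hasDerivAt_pos hasDerivAt_erf fun x => by positivity

@[simp] lemma erf_zero : erf 0 = 0 := by simp [erf]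

lemma erf_neg (x : ℝ) : erf (-x) = -erf x := by
  have h := intervalIntegral.integral_comp_neg (a := 0) (b := -x) fun t : ℝ => exp (-t ^ 2)
  simp only [neg_zero, neg_neg, neg_sq] at h
  rw [erf, erf, h, intervalIntegral.integral_symm]
  ring

lemma erf_neg_iff {x : ℝ} : erf x < 0 ↔ x < 0 := by
  simpa using erf_strictMono.lt_iff_lt (b := 0)

lemma erf_nonpos_iff {x : ℝ} : erf x ≤ 0 ↔ x ≤ 0 := by
  simpa using erf_strictMono.le_iff_le (b := 0)

lemma erf_pos_iff {x : ℝ} : 0 < erf x ↔ 0 < x := by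
  simpa using erf_strictMono.lt_iff_lt (a := 0)

lemma abs_erf_le (x : ℝ) : |erf x| ≤ 2 / √π * |x| := by
  have hint : ‖∫ t in (0 : ℝ)..x, exp (-t ^ 2)‖ ≤ 1 * |x - 0| :=
    intervalIntegral.norm_integral_le_of_norm_le_const fun t _ => by
      rw [Real.norm_eq_abs, abs_of_pos (exp_pos _), exp_le_one_iff]
      exact neg_nonpos.mpr (sq_nonneg t)
  rw [erf, abs_mul, abs_of_pos (by positivity : (0 : ℝ) < 2 / √π)]
  rw [Real.norm_eq_abs, one_mul, sub_zero] at hint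
  exact mul_le_mul_of_nonneg_left hint (by positivity)

lemma tendsto_erf_atTop : Tendsto erf atTop (𝓝 1) := by
  have hint : IntegrableOn (fun t : ℝ => exp (-t ^ 2)) (Ioi 0) := by
    simpa using (integrable_exp_neg_mul_sq one_pos).integrableOn (s := Ioi 0)
  have h := (intervalIntegral_tendsto_integral_Ioi 0 hint tendsto_id).const_mul (2 / √π)
  have hval : ∫ t in Ioi (0 : ℝ), exp (-t ^ 2) = √π / 2 := by
    simpa using integral_gaussian_Ioi 1
  rwa [hval, div_mul_div_comm, mul_comm 2, div_self (by positivity)] at h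

lemma erf_lt_one (x : ℝ) : erf x < 1 :=
  erf_strictMono.lt_of_tendsto_atTop tendsto_erf_atTop x

lemma abs_erf_lt_one (x : ℝ) : |erf x| < 1 :=
  abs_lt.mpr ⟨by linarith [erf_neg x, erf_lt_one (-x)], erf_lt_one x⟩

lemma one_sub_erf_sq_pos (x : ℝ) : 0 < 1 - erf x ^ 2 := by
  nlinarith [abs_erf_lt_one x, abs_nonneg (erf x), sq_abs (erf x)]

lemma abs_lt_sqrt_sq_add_two (a : ℝ) : |a| < √(a ^ 2 + 2) := by
  rw [← sqrt_sq_eq_abs]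
  exact sqrt_lt_sqrt (sq_nonneg a) (by linarith)

lemma add_sqrt_sq_add_two_pos (a : ℝ) : 0 < a + √(a ^ 2 + 2) := by
  linarith [neg_abs_le a, abs_lt_sqrt_sq_add_two a]

noncomputable def gaussTailLower (a : ℝ) : ℝ := exp (-a ^ 2) / (a + √(a ^ 2 + 2))

lemma hasDerivAt_gaussTailLower (a : ℝ) :
    HasDerivAt gaussTailLower
      (-exp (-a ^ 2) + exp (-a ^ 2) * (1 - a / √(a ^ 2 + 2)) / (a + √(a ^ 2 + 2)) ^ 2) a := by
  have hs2 : √(a ^ 2 + 2) ^ 2 = a ^ 2 + 2 := sq_sqrt (by positivity)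
  have hD := add_sqrt_sq_add_two_pos a
  have hnum : HasDerivAt (fun a : ℝ => exp (-a ^ 2)) (exp (-a ^ 2) * -(2 * a)) a := by
    simpa using ((hasDerivAt_pow 2 a).neg).exp
  have hden : HasDerivAt (fun a : ℝ => a + √(a ^ 2 + 2)) (1 + 2 * a / (2 * √(a ^ 2 + 2))) a := by
    have hsq : HasDerivAt (fun a : ℝ => a ^ 2 + 2) (2 * a) a := by
      simpa using (hasDerivAt_pow 2 a).add_const 2
    exact (hasDerivAt_id' a).add (hsq.sqrt (by positivity))
  refine (hnum.div hden hD.ne').congr_deriv ?_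
  field_simp
  linear_combination √(a ^ 2 + 2) * hs2

lemma tendsto_gaussTailLower_atTop : Tendsto gaussTailLower atTop (𝓝 0) := by
  have hexp : Tendsto (fun a : ℝ => exp (-a ^ 2)) atTop (𝓝 0) :=
    tendsto_exp_neg_atTop_nhds_zero.comp (tendsto_pow_atTop two_ne_zero)
  refine hexp.div_atTop (tendsto_atTop_mono (fun a => ?_) tendsto_id)
  show a ≤ a + √(a ^ 2 + 2)
  linarith [abs_nonneg a, abs_lt_sqrt_sq_add_two a]

lemma gaussTailLower_lt (a : ℝ) : 2 / √π * gaussTailLower a < 1 - erf a := by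
  set K := fun a => erf a + 2 / √π * gaussTailLower a
  have hK : StrictMono K := by
    refine strictMono_of_hasDerivAt_pos (fun a => (hasDerivAt_erf a).add
      ((hasDerivAt_gaussTailLower a).const_mul _)) fun a => ?_
    -- the `exp (-a ^ 2)` terms cancel, leaving `2/√π · e^{-a²} (1 - a/√(a²+2)) / (a + √(a²+2))²`
    have hs : a / √(a ^ 2 + 2) < 1 := by
      rw [div_lt_one (by linarith [abs_nonneg a, abs_lt_sqrt_sq_add_two a])]
      linarith [le_abs_self a, abs_lt_sqrt_sq_add_two a]
    have hD := add_sqrt_sq_add_two_pos a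
    have := mul_pos (div_pos two_pos (sqrt_pos.mpr pi_pos))
      (div_pos (mul_pos (exp_pos (-a ^ 2)) (sub_pos.mpr hs)) (pow_pos hD 2))
    linarith
  have hlim : Tendsto K atTop (𝓝 1) := by
    simpa using tendsto_erf_atTop.add (tendsto_gaussTailLower_atTop.const_mul (2 / √π))
  have := hK.lt_of_tendsto_atTop hlim a
  simp only [K] at this
  linarith

lemma erf_mul_exp_lt {a : ℝ} (ha : 0 < a) :
    erf a * exp (-a ^ 2) < √π * a * (1 - erf a ^ 2) := by
  set E := erf a
  set s := √(a ^ 2 + 2)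
  have hsp : 0 < √π := sqrt_pos.mpr pi_pos
  have hs2 : s ^ 2 = a ^ 2 + 2 := sq_sqrt (by positivity)
  have hD : 0 < a + s := add_sqrt_sq_add_two_pos a
  have hE : 0 < E := erf_pos_iff.mpr ha
  have hE1 : E < 1 := erf_lt_one a
  have hexp : exp (-a ^ 2) < √π / 2 * (1 - E) * (a + s) := by
    have := gaussTailLower_lt a
    rw [gaussTailLower, ← mul_div_assoc, div_lt_iff₀ hD, div_mul_eq_mul_div,
      div_lt_iff₀ hsp] at this
    linarith
  have hEsq : E ^ 2 * π ≤ 4 * a ^ 2 := by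
    have := pow_le_pow_left₀ (abs_nonneg _) (abs_erf_le a) 2
    rw [sq_abs, abs_of_pos ha, mul_pow, div_pow, sq_sqrt pi_pos.le, div_mul_eq_mul_div,
      le_div_iff₀ pi_pos] at this
    linarith
  -- `E ≤ 2a/√π` and `π > 2` give `E² (a² + 2) ≤ a² (2 + E)²`
  have hEs : E * s ≤ a * (2 + E) := by
    rw [← pow_le_pow_iff_left₀ (by positivity) (by positivity) two_ne_zero, mul_pow, hs2]
    nlinarith [pi_gt_three, mul_pos (mul_pos ha ha) hE]
  calc E * exp (-a ^ 2) < E * (√π / 2 * (1 - E) * (a + s)) := mul_lt_mul_of_pos_left hexp hE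
    _ = √π / 2 * (1 - E) * (E * a + E * s) := by ring
    _ ≤ √π / 2 * (1 - E) * (E * a + a * (2 + E)) := by gcongr
    _ = √π * a * (1 - E ^ 2) := by ring

lemma hasDerivAt_exp_div_one_sub_erf_sq (y : ℝ) :
    HasDerivAt (fun y => exp (-2 * y ^ 2) / (1 - erf y ^ 2))
      (4 / √π * exp (-2 * y ^ 2) * (√π * -y * (1 - erf y ^ 2) + erf y * exp (-y ^ 2)) /
        (1 - erf y ^ 2) ^ 2) y := by
  have hnum :
      HasDerivAt (fun y : ℝ => exp (-2 * y ^ 2)) (exp (-2 * y ^ 2) * (-2 * (2 * y))) y := by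
    simpa using ((hasDerivAt_pow 2 y).const_mul (-2)).exp
  have hden :
      HasDerivAt (fun y => 1 - erf y ^ 2) (-(2 * erf y * (2 / √π * exp (-y ^ 2)))) y := by
    simpa using ((hasDerivAt_erf y).pow 2).const_sub 1
  refine (hnum.div hden (one_sub_erf_sq_pos y).ne').congr_deriv ?_
  field_simp
  ring

lemma strictMonoOn_exp_div_one_sub_erf_sq :
    StrictMonoOn (fun y => exp (-2 * y ^ 2) / (1 - erf y ^ 2)) (Iio 0) := by
  refine strictMonoOn_of_deriv_pos (convex_Iio 0)
    (fun y _ => (hasDerivAt_exp_div_one_sub_erf_sq y).continuousAt.continuousWithinAt)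
    fun y hy => ?_
  rw [interior_Iio] at hy
  rw [(hasDerivAt_exp_div_one_sub_erf_sq y).deriv]
  have key := erf_mul_exp_lt (neg_pos.mpr hy)
  rw [erf_neg, neg_sq, neg_sq] at key
  have := one_sub_erf_sq_pos y
  refine div_pos (mul_pos (by positivity) ?_) (by positivity)
  linarith

lemma sq_one_div_sqrt_mul_exp (y : ℝ) :
    (1 / √(2 * π * (1 - erf y ^ 2)) * exp (-(y ^ 2))) ^ 2 =
      exp (-2 * y ^ 2) / (1 - erf y ^ 2) / (2 * π) := by
  have := one_sub_erf_sq_pos y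
  rw [mul_pow, div_pow, sq_sqrt (by positivity), ← exp_nat_mul]
  field_simp
  norm_num

lemma two_mul_div_sqrt_pi_le_erf {x : ℝ} (hx : x ≤ 0) : 2 * x / √π ≤ erf x := by
  have := (abs_le.mp (abs_erf_le x)).1
  rw [abs_of_nonpos hx] at this
  linarith [mul_div_assoc 2 x √π, div_mul_eq_mul_div 2 √π x]

lemma two_mul_div_sqrt_pi_le_erf_mul_exp {x c : ℝ} (hx : x ≤ 0) (hc : c ≤ 0) :
    2 * x / √π ≤ erf x * exp (c * x ^ 2) :=
  (two_mul_div_sqrt_pi_le_erf hx).trans <| le_mul_of_le_one_right (erf_nonpos_iff.mpr hx)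
    (exp_le_one_iff.mpr (mul_nonpos_of_nonpos_of_nonneg hc (sq_nonneg x)))

lemma one_div_sqrt_mul_exp_lt {y₁ y₂ : ℝ} (hy₂ : y₂ < 0) (hy : y₁ < y₂) :
    1 / √(2 * π * (1 - erf y₁ ^ 2)) * exp (-(y₁ ^ 2)) <
      1 / √(2 * π * (1 - erf y₂ ^ 2)) * exp (-(y₂ ^ 2)) := by
  rw [← pow_lt_pow_iff_left₀ (by positivity) (by positivity) two_ne_zero,
    sq_one_div_sqrt_mul_exp, sq_one_div_sqrt_mul_exp]
  exact div_lt_div_of_pos_right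
    (strictMonoOn_exp_div_one_sub_erf_sq (hy.trans hy₂) hy₂ hy) (by positivity)

theorem stmt_7 :
    (∀ x : ℝ, x < 0 →
      erf x * Real.exp ((4 / Real.pi - 4 / 3) * x ^ 2) ≥ 2 * x / Real.sqrt Real.pi) ∧
    (∀ M₁ M₂ : ℝ, M₁ ∈ Set.Ioo (-1 : ℝ) 0 → M₂ ∈ Set.Ioo (-1 : ℝ) 0 → M₁ < M₂ →
      ∀ y₁ y₂ : ℝ, erf y₁ = M₁ → erf y₂ = M₂ →
      (1 / Real.sqrt (2 * Real.pi * (1 - M₁ ^ 2))) * Real.exp (-(y₁ ^ 2)) <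
        (1 / Real.sqrt (2 * Real.pi * (1 - M₂ ^ 2))) * Real.exp (-(y₂ ^ 2))) := by
  refine ⟨fun x hx => two_mul_div_sqrt_pi_le_erf_mul_exp hx.le ?_, ?_⟩
  · linarith [div_lt_div_of_pos_left (by norm_num : (0 : ℝ) < 4) (by norm_num) pi_gt_three]
  · rintro _ _ - hM₂ hM y₁ y₂ rfl rfl
    exact one_div_sqrt_mul_exp_lt (erf_neg_iff.mp hM₂.2) (erf_strictMono.lt_iff_lt.mp hM)
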